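/- arXiv:1011.4616 — 4 statements merged into one kernel-verified Lean document; each statement's English description precedes it below -/
import Mathlib

section
/- Let f be a finite signed Radon measure supported in a bounded open set ω ⊂ ℝ² with f(ω) ≥ 0. Then there exists a positive Radon measure g with 0 ≤ g ≤ f₊ such that for every Lipschitz function ξ on ω, ∫ ξ d(f−g) ≤ 2·diam(ω)·‖∇ξ‖_{L∞(ω)}·f₋(ω). -/
/-!
Put `μ = f₊`, `ν = f₋` and `r = ν(ω) / μ(ω) ≤ 1`, and split `μ = g + h` with `g = (1 - r) μ` and
`h = r μ`. Then `∫ ξ d(f - g) = ∫_ω ξ dh - ∫_ω ξ dν`, where `h` and `ν` have the same mass `ν(ω)`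
on `ω`. Hence subtracting the constant `ξ(x₀)`, for a point `x₀ ∈ ω`, does not change the
difference, and afterwards the integrand is bounded by `K · diam ω` on `ω`, so each of the two
integrals is at most `K · diam ω · ν(ω)` in absolute value.
-/

open MeasureTheory Metric

namespace MeasureTheory

theorem Measure.exists_add_eq_and_apply_eq {X : Type*} [MeasurableSpace X] {μ ν : Measure X}
    [IsFiniteMeasure μ] {s : Set X} (hνμ : ν s ≤ μ s) :
    ∃ g h : Measure X, g + h = μ ∧ h s = ν s := by
  have hr : ν s / μ s ≤ 1 := ENNReal.div_le_of_le_mul (by rwa [one_mul])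
  refine ⟨(1 - ν s / μ s) • μ, (ν s / μ s) • μ, ?_, ?_⟩
  · rw [← add_smul, tsub_add_cancel_of_le hr, one_smul]
  · rw [Measure.smul_apply, smul_eq_mul]
    rcases eq_or_ne (μ s) 0 with hμ | hμ
    · simp [hμ, le_antisymm (hμ ▸ hνμ) zero_le]
    · exact ENNReal.div_mul_cancel hμ (measure_ne_top μ s)

theorem SignedMeasure.negPart_apply_le_posPart_apply {X : Type*} [MeasurableSpace X]
    (f : SignedMeasure X) {s : Set X} (hs : MeasurableSet s) (hf : 0 ≤ f s) :
    f.toJordanDecomposition.negPart s ≤ f.toJordanDecomposition.posPart s := by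
  rw [f.apply_eq_posPart_real_sub_negPart_real hs, sub_nonneg] at hf
  exact (ENNReal.toReal_le_toReal (measure_ne_top _ _) (measure_ne_top _ _)).1 hf

end MeasureTheory

namespace LipschitzOnWith

variable {X : Type*} [PseudoMetricSpace X] [MeasurableSpace X] [OpensMeasurableSpace X]
  {μ ν : Measure X} {s : Set X} {ξ : X → ℝ} {K : NNReal}

theorem integrableOn_of_isBounded [IsFiniteMeasure μ] (hξ : LipschitzOnWith K ξ s)
    (hs : Bornology.IsBounded s) (hsm : MeasurableSet s) : IntegrableOn ξ s μ := by
  obtain ⟨ξ', hξ', hξξ'⟩ := hξ.extend_real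
  obtain ⟨C, hC⟩ := (hξξ'.image_eq ▸ hξ'.isBounded_image hs).exists_norm_le
  exact .of_bound (measure_lt_top μ s) (hξ.continuousOn.aestronglyMeasurable hsm) C
    (ae_restrict_of_forall_mem hsm fun x hx => hC _ (Set.mem_image_of_mem ξ hx))

theorem abs_setIntegral_sub_le [IsFiniteMeasure μ] (hξ : LipschitzOnWith K ξ s)
    (hs : Bornology.IsBounded s) (hsm : MeasurableSet s) {x₀ : X} (hx₀ : x₀ ∈ s) :
    |∫ x in s, ξ x ∂μ - μ.real s * ξ x₀| ≤ K * diam s * μ.real s := by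
  have hosc : ∀ x ∈ s, ‖ξ x - ξ x₀‖ ≤ K * diam s := fun x hx =>
    calc ‖ξ x - ξ x₀‖ = dist (ξ x) (ξ x₀) := (dist_eq_norm _ _).symm
      _ ≤ K * dist x x₀ := hξ.dist_le_mul x hx x₀ hx₀
      _ ≤ K * diam s := by gcongr; exact dist_le_diam_of_mem hs hx hx₀
  rw [← smul_eq_mul, ← setIntegral_const,
    ← integral_sub (hξ.integrableOn_of_isBounded hs hsm) (integrableOn_const (measure_ne_top _ _))]
  exact norm_setIntegral_le_of_norm_le_const (measure_lt_top μ s) hosc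

theorem setIntegral_sub_setIntegral_le [IsFiniteMeasure μ] [IsFiniteMeasure ν]
    (hξ : LipschitzOnWith K ξ s) (hs : Bornology.IsBounded s) (hsm : MeasurableSet s)
    (hμν : μ s = ν s) :
    ∫ x in s, ξ x ∂μ - ∫ x in s, ξ x ∂ν ≤ 2 * diam s * K * ν.real s := by
  rcases s.eq_empty_or_nonempty with rfl | ⟨x₀, hx₀⟩
  · simp
  have hμν' : μ.real s = ν.real s := by rw [measureReal_def, hμν, measureReal_def]
  have hμ := abs_le.1 (hξ.abs_setIntegral_sub_le (μ := μ) hs hsm hx₀)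
  have hν := abs_le.1 (hξ.abs_setIntegral_sub_le (μ := ν) hs hsm hx₀)
  rw [hμν'] at hμ
  linarith [hμ.2, hν.1]

end LipschitzOnWith

theorem stmt0_general
    (ω : Set (EuclideanSpace ℝ (Fin 2))) (hω : IsOpen ω) (hb : Bornology.IsBounded ω)
    (f : SignedMeasure (EuclideanSpace ℝ (Fin 2)))
    (hf : 0 ≤ f ω) :
    ∃ g : Measure (EuclideanSpace ℝ (Fin 2)),
      g ≤ f.toJordanDecomposition.posPart ∧
      ∀ (ξ : EuclideanSpace ℝ (Fin 2) → ℝ) (K : NNReal), LipschitzOnWith K ξ ω →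
        (∫ x in ω, ξ x ∂f.toJordanDecomposition.posPart)
          - (∫ x in ω, ξ x ∂f.toJordanDecomposition.negPart)
          - (∫ x in ω, ξ x ∂g)
        ≤ 2 * diam ω * (K : ℝ) * (f.toJordanDecomposition.negPart ω).toReal := by
  have hωm := hω.measurableSet
  obtain ⟨g, h, hgh, hh⟩ := Measure.exists_add_eq_and_apply_eq
    (f.negPart_apply_le_posPart_apply hωm hf)
  have hg : g ≤ f.toJordanDecomposition.posPart := hgh ▸ Measure.le_add_right le_rfl
  have hh' : h ≤ f.toJordanDecomposition.posPart := hgh ▸ Measure.le_add_left le_rfl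
  have := isFiniteMeasure_of_le _ hg
  have := isFiniteMeasure_of_le _ hh'
  refine ⟨g, hg, fun ξ K hξ => ?_⟩
  rw [← hgh, Measure.restrict_add, integral_add_measure (hξ.integrableOn_of_isBounded hb hωm)
    (hξ.integrableOn_of_isBounded hb hωm)]
  have hbound := hξ.setIntegral_sub_setIntegral_le hb hωm hh
  rw [measureReal_def] at hbound
  linarith

/-- mass displacement lemma (easy version). -/
theorem stmt0
    (ω : Set (EuclideanSpace ℝ (Fin 2))) (hω : IsOpen ω) (hb : Bornology.IsBounded ω)
    (f : SignedMeasure (EuclideanSpace ℝ (Fin 2)))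
    (hsupp : ∀ s : Set (EuclideanSpace ℝ (Fin 2)), MeasurableSet s → s ∩ ω = ∅ → f s = 0)
    (hf : 0 ≤ f ω) :
    ∃ g : Measure (EuclideanSpace ℝ (Fin 2)),
      g ≤ f.toJordanDecomposition.posPart ∧
      ∀ (ξ : EuclideanSpace ℝ (Fin 2) → ℝ) (K : NNReal), LipschitzOnWith K ξ ω →
        (∫ x in ω, ξ x ∂f.toJordanDecomposition.posPart)
          - (∫ x in ω, ξ x ∂f.toJordanDecomposition.negPart)
          - (∫ x in ω, ξ x ∂g)
        ≤ 2 * diam ω * (K : ℝ) * (f.toJordanDecomposition.negPart ω).toReal :=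
  stmt0_general ω hω hb f hf
end

section
/- Let u : ∂B(x,r) → ℂ be C¹ with m = min_{∂B(x,r)} |u| > 0, and write the current j = (iu, ∇u − iAu) for a C¹ vector field A on the closed ball B(x,r). Let d be the winding number of u/|u| on ∂B(x,r) and X = ∫_{B(x,r)} curl A. Then (1/2)∫_{∂B(x,r)} |u|²|∇φ − A|² + (1/2)∫_{B(x,r)} |curl A|² ≥ (π d²/r)·(m²/(1 + m² r/2)), where u = |u|e^{iφ} locally. -/
open MeasureTheory Real

/-!
With `g = φ'/r - a`, the degree and flux conditions give `∫₀^{2π} g = (2πd - X)/r`. Cauchy–Schwarz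
on the circle, together with `ρ ≥ m`, bounds the circle energy below by `m²(2πd - X)²/(4πr)`, and
Cauchy–Schwarz on the disc bounds the field energy below by `X²/(2πr²)`. Minimizing the sum of
these two quadratics over the unknown flux `X` gives the bound.
-/

theorem sq_integral_le_measureReal_mul_integral_sq {α : Type*} [MeasurableSpace α]
    {μ : Measure α} [IsFiniteMeasure μ] {f : α → ℝ}
    (hf2 : Integrable (fun x => f x ^ 2) μ) :
    (∫ x, f x ∂μ) ^ 2 ≤ μ.real Set.univ * ∫ x, f x ^ 2 ∂μ := by
  by_cases hf : Integrable f μ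
  swap
  · rw [integral_undef hf, sq, zero_mul]
    exact mul_nonneg measureReal_nonneg (integral_nonneg fun x => sq_nonneg _)
  rcases eq_zero_or_neZero μ with rfl | _
  · simp
  set V := μ.real Set.univ
  have hV : 0 < V := by
    simp [V, Measure.real, ENNReal.toReal_pos_iff, measure_lt_top, NeZero.ne]
  have jensen := even_two.convexOn_pow.map_average_le (continuous_pow 2).continuousOn
    isClosed_univ (by simp) hf hf2
  simp only [average_eq, smul_eq_mul, mul_pow, inv_pow] at jensen
  calc (∫ x, f x ∂μ) ^ 2 = V ^ 2 * ((V ^ 2)⁻¹ * (∫ x, f x ∂μ) ^ 2) := by field_simp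
    _ ≤ V ^ 2 * (V⁻¹ * ∫ x, f x ^ 2 ∂μ) := by gcongr
    _ = V * ∫ x, f x ^ 2 ∂μ := by field_simp

theorem intervalIntegral.sq_integral_le_mul_integral_sq {b : ℝ} (hb : 0 ≤ b) {f : ℝ → ℝ}
    (hf : Continuous f) :
    (∫ t in (0:ℝ)..b, f t) ^ 2 ≤ b * ∫ t in (0:ℝ)..b, f t ^ 2 := by
  have : IsFiniteMeasure (volume.restrict (Set.Ioc 0 b)) :=
    isFiniteMeasure_restrict.2 measure_Ioc_lt_top.ne
  simpa [intervalIntegral.integral_of_le hb, Measure.real, hb] using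
    sq_integral_le_measureReal_mul_integral_sq (μ := volume.restrict (Set.Ioc 0 b))
      ((hf.pow 2).integrableOn_Ioc)

theorem intervalIntegral.mul_sq_integral_le_mul_integral_mul_sq {b m : ℝ} (hb : 0 ≤ b)
    (hm : 0 ≤ m) {ρ g : ℝ → ℝ} (hρm : ∀ t, m ≤ ρ t) (hρ : Continuous ρ) (hg : Continuous g) :
    m ^ 2 * (∫ t in (0:ℝ)..b, g t) ^ 2 ≤ b * ∫ t in (0:ℝ)..b, ρ t ^ 2 * g t ^ 2 := by
  have hweight : ∫ t in (0:ℝ)..b, m ^ 2 * g t ^ 2 ≤ ∫ t in (0:ℝ)..b, ρ t ^ 2 * g t ^ 2 := by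
    refine intervalIntegral.integral_mono_on hb
      ((continuous_const.mul (hg.pow 2)).intervalIntegrable _ _)
      (((hρ.pow 2).mul (hg.pow 2)).intervalIntegrable _ _) fun t _ => ?_
    gcongr
    exact hρm t
  calc m ^ 2 * (∫ t in (0:ℝ)..b, g t) ^ 2 ≤ m ^ 2 * (b * ∫ t in (0:ℝ)..b, g t ^ 2) := by
        gcongr; exact intervalIntegral.sq_integral_le_mul_integral_sq hb hg
    _ = b * ∫ t in (0:ℝ)..b, m ^ 2 * g t ^ 2 := by
        rw [intervalIntegral.integral_const_mul]; ring
    _ ≤ b * ∫ t in (0:ℝ)..b, ρ t ^ 2 * g t ^ 2 := by gcongr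

theorem Complex.sq_setIntegral_ball_le_mul_setIntegral_sq {x : ℂ} {r : ℝ} (hr : 0 ≤ r)
    {h : ℂ → ℝ} (hh2 : IntegrableOn (fun z => h z ^ 2) (Metric.ball x r)) :
    (∫ z in Metric.ball x r, h z) ^ 2 ≤ π * r ^ 2 * ∫ z in Metric.ball x r, h z ^ 2 := by
  have : IsFiniteMeasure (volume.restrict (Metric.ball x r)) :=
    isFiniteMeasure_restrict.2 measure_ball_lt_top.ne
  have hV : volume.real (Metric.ball x r) = π * r ^ 2 := by
    simp [Measure.real, hr, mul_comm]
  simpa [hV] using sq_integral_le_measureReal_mul_integral_sq hh2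

theorem mul_mul_sq_div_add_le {α β : ℝ} (hα : 0 < α) (hβ : 0 < β) (D X : ℝ) :
    α * β * D ^ 2 / (α + β) ≤ α * (D - X) ^ 2 + β * X ^ 2 := by
  rw [div_le_iff₀ (by positivity)]
  nlinarith [sq_nonneg (α * (D - X) - β * X)]

theorem stmt6_general (x : ℂ) (r m X : ℝ) (d : ℤ) (hr : 0 < r) (hm0 : 0 < m)
    (ρ φ φ' a : ℝ → ℝ) (h : ℂ → ℝ)
    (hρm : ∀ θ, m ≤ ρ θ) (hcρ : Continuous ρ) (hca : Continuous a) (hcφ' : Continuous φ')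
    (hφ : ∀ θ, HasDerivAt φ (φ' θ) θ)
    (hdeg : φ (2 * π) - φ 0 = 2 * π * d)
    (hX1 : (∫ θ in (0:ℝ)..(2 * π), a θ * r) = X)
    (hX2 : (∫ z in Metric.ball x r, h z) = X)
    (hh2 : Integrable (fun z => (h z) ^ 2) (volume.restrict (Metric.ball x r))) :
    π * (d : ℝ) ^ 2 / r * (m ^ 2 / (1 + m ^ 2 * r / 2)) ≤
      (1 / 2) * (∫ θ in (0:ℝ)..(2 * π), (ρ θ) ^ 2 * (φ' θ / r - a θ) ^ 2 * r)
        + (1 / 2) * ∫ z in Metric.ball x r, (h z) ^ 2 := by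
  have hφ' : ∫ θ in (0:ℝ)..(2 * π), φ' θ = 2 * π * d := by
    rw [intervalIntegral.integral_eq_sub_of_hasDerivAt (fun θ _ => hφ θ)
      (hcφ'.intervalIntegrable _ _), hdeg]
  have ha : ∫ θ in (0:ℝ)..(2 * π), a θ = X / r := by
    rw [← hX1, intervalIntegral.integral_mul_const, mul_div_cancel_right₀ _ hr.ne']
  have hflux : ∫ θ in (0:ℝ)..(2 * π), (φ' θ / r - a θ) = (2 * π * d - X) / r := by
    rw [intervalIntegral.integral_sub ((hcφ'.div_const r).intervalIntegrable _ _)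
      (hca.intervalIntegrable _ _), intervalIntegral.integral_div, hφ', ha, sub_div]
  have hcircle := intervalIntegral.mul_sq_integral_le_mul_integral_mul_sq (b := 2 * π)
    (g := fun θ => φ' θ / r - a θ) (by positivity) hm0.le hρm hcρ ((hcφ'.div_const r).sub hca)
  rw [hflux] at hcircle
  have hdisc := Complex.sq_setIntegral_ball_le_mul_setIntegral_sq (x := x) hr.le hh2
  rw [hX2] at hdisc
  rw [intervalIntegral.integral_mul_const]
  have hπ := pi_pos
  calc π * (d : ℝ) ^ 2 / r * (m ^ 2 / (1 + m ^ 2 * r / 2))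
      = m ^ 2 / (4 * π * r) * (1 / (2 * π * r ^ 2)) * (2 * π * d) ^ 2
          / (m ^ 2 / (4 * π * r) + 1 / (2 * π * r ^ 2)) := by
        field_simp; ring
    _ ≤ m ^ 2 / (4 * π * r) * (2 * π * d - X) ^ 2 + 1 / (2 * π * r ^ 2) * X ^ 2 :=
        mul_mul_sq_div_add_le (by positivity) (by positivity) _ _
    _ = r / (4 * π) * (m ^ 2 * ((2 * π * d - X) / r) ^ 2) + X ^ 2 / (2 * π * r ^ 2) := by
        field_simp
    _ ≤ r / (4 * π) * (2 * π * ∫ θ in (0:ℝ)..(2 * π), ρ θ ^ 2 * (φ' θ / r - a θ) ^ 2)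
          + π * r ^ 2 * (∫ z in Metric.ball x r, h z ^ 2) / (2 * π * r ^ 2) := by
        gcongr
    _ = _ := by field_simp; ring

/-- circle lower bound for the Ginzburg–Landau energy with magnetic field.
The circle `∂B(x,r)` is parametrized by the angle `θ`; `ρ θ = |u|`, `φ` is the phase of `u`,
`a θ` is the tangential component `A·τ` of the vector potential along the circle, and
`h = curl A` on the ball.  The quantity `(1/2)∫_{∂B} |u|²|∇φ−A|²` is bounded below by its
tangential part `(1/2)∫₀^{2π} ρ² (φ'/r − a)² r dθ`. -/
theorem stmt6 (x : ℂ) (r m X : ℝ) (d : ℤ) (hr : 0 < r) (hm0 : 0 < m) (hm1 : m ≤ 1)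
    (ρ φ φ' a : ℝ → ℝ) (h : ℂ → ℝ)
    (hρm : ∀ θ, m ≤ ρ θ) (hcρ : Continuous ρ) (hca : Continuous a) (hcφ' : Continuous φ')
    (hφ : ∀ θ, HasDerivAt φ (φ' θ) θ)
    (hdeg : φ (2 * π) - φ 0 = 2 * π * d)
    (hX1 : (∫ θ in (0:ℝ)..(2 * π), a θ * r) = X)
    (hX2 : (∫ z in Metric.ball x r, h z) = X)
    (hh2 : Integrable (fun z => (h z) ^ 2) (volume.restrict (Metric.ball x r))) :
    π * (d : ℝ) ^ 2 / r * (m ^ 2 / (1 + m ^ 2 * r / 2)) ≤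
      (1 / 2) * (∫ θ in (0:ℝ)..(2 * π), (ρ θ) ^ 2 * (φ' θ / r - a θ) ^ 2 * r)
        + (1 / 2) * ∫ z in Metric.ball x r, (h z) ^ 2 :=
  stmt6_general x r m X d hr hm0 ρ φ φ' a h hρm hcρ hca hcφ' hφ hdeg hX1 hX2 hh2
end

section
/- With λ_ε(x) = min(c₂/ε, (π/x)·1/(1 + x/2 + πε/(c₀x))) and Λ_ε(s) = ∫₀ˢ λ_ε, there is a constant C₀ > 0 (depending only on c₀, c₂) such that for all ε > 0 and all s with ε ≤ s ≤ 1/2, Λ_ε(s) ≥ π·log(s/ε) − C₀. -/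
open Real

set_option maxHeartbeats 1000000 in
/-- `Λ_ε(s) ≥ π log(s/ε) − C₀` for `ε ≤ s ≤ 1/2`, with `C₀` depending only
on `c₀, c₂`. -/
theorem stmt9 (c0 c2 : ℝ) (hc0 : 0 < c0) (hc2 : 0 < c2) :
    ∃ C0 : ℝ, 0 < C0 ∧ ∀ ε : ℝ, 0 < ε → ∀ s : ℝ, ε ≤ s → s ≤ 1 / 2 →
      π * Real.log (s / ε) - C0 ≤
        ∫ t in (0:ℝ)..s, min (c2 / ε) (π / t * (1 / (1 + t / 2 + π * ε / (c0 * t)))) := by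
  have hπ : (0:ℝ) < π := pi_pos
  set a : ℝ := max (π / c2) 1 with ha_def
  have ha1 : (1:ℝ) ≤ a := le_max_right _ _
  have ha0 : (0:ℝ) < a := lt_of_lt_of_le one_pos ha1
  have hπa : π ≤ a * c2 := by
    have := le_max_left (π / c2) 1
    calc π = (π / c2) * c2 := by field_simp
    _ ≤ a * c2 := by nlinarith
  have hloga : 0 ≤ Real.log a := Real.log_nonneg ha1
  refine ⟨π * Real.log a + π / 4 + π ^ 2 / (c0 * a) + 1, by positivity, ?_⟩
  intro ε hε s hεs hs2
  have hs0 : 0 < s := lt_of_lt_of_le hε hεs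
  set f : ℝ → ℝ := fun t => min (c2 / ε) (π / t * (1 / (1 + t / 2 + π * ε / (c0 * t)))) with hf_def
  have hf_nonneg : ∀ u : ℝ, 0 ≤ u → 0 ≤ f u := by
    intro u hu
    refine le_min (by positivity) ?_
    have hden : 0 ≤ 1 + u / 2 + π * ε / (c0 * u) := by positivity
    positivity
  by_cases hcase : s ≤ a * ε
  · have h1 : 0 ≤ ∫ t in (0:ℝ)..s, f t :=
      intervalIntegral.integral_nonneg (le_of_lt hs0) (fun u hu => hf_nonneg u hu.1)
    have h2 : Real.log (s / ε) ≤ Real.log a := by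
      apply Real.log_le_log (by positivity)
      rw [div_le_iff₀ hε]; linarith
    have h3 : (0:ℝ) < π ^ 2 / (c0 * a) := by positivity
    linarith [mul_le_mul_of_nonneg_left h2 hπ.le]
  · push_neg at hcase
    set b : ℝ := a * ε with hb_def
    have hb0 : 0 < b := by positivity
    have hbs : b ≤ s := hcase.le
    -- continuity of f on sets avoiding 0
    have hsub : Set.uIcc b s ⊆ {t : ℝ | 0 < t} := by
      rw [Set.uIcc_of_le hbs]
      intro t ht; exact lt_of_lt_of_le hb0 ht.1
    have h01 : ContinuousOn (fun t : ℝ => π / t) (Set.uIcc b s) :=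
      continuousOn_const.div continuousOn_id (fun t ht => ne_of_gt (hsub ht))
    have hdc : ContinuousOn (fun t : ℝ => 1 + t / 2 + π * ε / (c0 * t)) (Set.uIcc b s) := by
      refine ContinuousOn.add (ContinuousOn.add continuousOn_const
        (continuousOn_id.div_const 2)) ?_
      exact continuousOn_const.div (continuousOn_const.mul continuousOn_id)
        (fun t ht => ne_of_gt (by have h : 0 < t := hsub ht; positivity))
    have hdne : ∀ t ∈ Set.uIcc b s, 1 + t / 2 + π * ε / (c0 * t) ≠ 0 := by
      intro t ht
      have h : 0 < t := hsub ht
      positivity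
    have hinner : ContinuousOn (fun t : ℝ => π / t * (1 / (1 + t / 2 + π * ε / (c0 * t))))
        (Set.uIcc b s) := h01.mul (continuousOn_const.div hdc hdne)
    have hfcont : ContinuousOn f (Set.uIcc b s) := continuousOn_const.inf hinner
    have hf_int_bs : IntervalIntegrable f MeasureTheory.volume b s :=
      hfcont.intervalIntegrable
    have hf_meas : Measurable f := by
      apply Measurable.min measurable_const
      exact (measurable_const.div measurable_id).mul
        (measurable_const.div ((measurable_const.add (measurable_id.div_const 2)).add
          (measurable_const.div (measurable_const.mul measurable_id))))
    have hf_int_0b : IntervalIntegrable f MeasureTheory.volume 0 b := by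
      apply IntervalIntegrable.mono_fun (intervalIntegrable_const (c := c2 / ε))
        hf_meas.aestronglyMeasurable.restrict
      filter_upwards [MeasureTheory.ae_restrict_mem measurableSet_uIoc] with t ht
      rw [Set.uIoc_of_le hb0.le] at ht
      have ht0 : 0 < t := ht.1
      rw [Real.norm_of_nonneg (hf_nonneg t ht0.le), Real.norm_of_nonneg (by positivity)]
      exact min_le_left _ _
    have hsplit := intervalIntegral.integral_add_adjacent_intervals hf_int_0b hf_int_bs
    have h0b : 0 ≤ ∫ t in (0:ℝ)..b, f t :=
      intervalIntegral.integral_nonneg hb0.le (fun u hu => hf_nonneg u hu.1)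
    set g : ℝ → ℝ := fun t => π * t⁻¹ - π / 2 - π ^ 2 * ε / c0 * t ^ (-2 : ℤ) with hg_def
    have hne : ∀ t ∈ Set.uIcc b s, t ≠ 0 := fun t ht => ne_of_gt (hsub ht)
    have h0notin : (0:ℝ) ∉ Set.uIcc b s := fun h => absurd rfl (hne 0 h)
    have hg1 : IntervalIntegrable (fun t : ℝ => π * t⁻¹) MeasureTheory.volume b s :=
      (intervalIntegral.intervalIntegrable_inv hne continuousOn_id).const_mul π
    have hg3 : IntervalIntegrable (fun t : ℝ => π ^ 2 * ε / c0 * t ^ (-2 : ℤ))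
        MeasureTheory.volume b s :=
      (intervalIntegral.intervalIntegrable_zpow (Or.inr h0notin)).const_mul _
    have hg_int : IntervalIntegrable g MeasureTheory.volume b s :=
      (hg1.sub intervalIntegrable_const).sub hg3
    have hpt : ∀ t ∈ Set.Icc b s, g t ≤ f t := by
      intro t ht
      have ht0 : 0 < t := lt_of_lt_of_le hb0 ht.1
      have hd0 : 0 < 1 + t / 2 + π * ε / (c0 * t) := by positivity
      have hu0 : 0 ≤ t / 2 + π * ε / (c0 * t) := by positivity
      have hmin : f t = π / t * (1 / (1 + t / 2 + π * ε / (c0 * t))) := by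
        apply min_eq_right
        have h1 : 1 / (1 + t / 2 + π * ε / (c0 * t)) ≤ 1 := by
          rw [div_le_one hd0]; linarith
        have hπt0 : 0 < π / t := by positivity
        have h2 : π / t ≤ c2 / ε := by
          rw [div_le_div_iff₀ ht0 hε]
          have htb : a * ε ≤ t := ht.1
          nlinarith
        nlinarith
      rw [hmin]
      have hkey : 1 - (t / 2 + π * ε / (c0 * t)) ≤ 1 / (1 + t / 2 + π * ε / (c0 * t)) := by
        rw [le_div_iff₀ hd0]
        nlinarith [sq_nonneg (t / 2 + π * ε / (c0 * t))]
      have hπt : 0 ≤ π / t := by positivity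
      have hmul := mul_le_mul_of_nonneg_left hkey hπt
      have heq : π / t * (1 - (t / 2 + π * ε / (c0 * t))) = g t := by
        have hz : (t : ℝ) ^ (-2 : ℤ) = (t ^ 2)⁻¹ := by
          rw [zpow_neg, zpow_two, sq]
        simp only [hg_def, hz]
        field_simp
        ring
      linarith [heq ▸ hmul]
    have hmono := intervalIntegral.integral_mono_on hbs hg_int hf_int_bs hpt
    have hI1 : ∫ t in b..s, t⁻¹ = Real.log (s / b) := integral_inv_of_pos hb0 hs0
    have hI2 : ∫ t in b..s, t ^ (-2 : ℤ) = b⁻¹ - s⁻¹ := by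
      rw [integral_zpow (Or.inr ⟨by norm_num, h0notin⟩)]
      norm_num
      ring
    have hgval : ∫ t in b..s, g t
        = π * Real.log (s / b) - π / 2 * (s - b) - π ^ 2 * ε / c0 * (b⁻¹ - s⁻¹) := by
      simp only [hg_def]
      rw [intervalIntegral.integral_sub (hg1.sub intervalIntegrable_const) hg3,
        intervalIntegral.integral_sub hg1 intervalIntegrable_const,
        intervalIntegral.integral_const_mul, intervalIntegral.integral_const_mul,
        hI1, hI2, intervalIntegral.integral_const]
      simp only [smul_eq_mul]
      ring
    have hlog : Real.log (s / b) = Real.log (s / ε) - Real.log a := by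
      rw [Real.log_div (ne_of_gt hs0) (ne_of_gt hb0),
        Real.log_div (ne_of_gt hs0) (ne_of_gt hε), hb_def,
        Real.log_mul (ne_of_gt ha0) (ne_of_gt hε)]
      ring
    have hbinv : π ^ 2 * ε / c0 * b⁻¹ = π ^ 2 / (c0 * a) := by
      rw [hb_def]
      field_simp
    have hsinv : 0 ≤ π ^ 2 * ε / c0 * s⁻¹ := by positivity
    have h54 : π / 2 * (s - b) ≤ π / 4 := by nlinarith
    rw [← hsplit]
    have hexp : π ^ 2 * ε / c0 * (b⁻¹ - s⁻¹)
        = π ^ 2 * ε / c0 * b⁻¹ - π ^ 2 * ε / c0 * s⁻¹ := by ring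
    rw [hgval, hlog, hexp, hbinv] at hmono
    linarith
end

section
/- Let ρ : ∂B_r → ℝ be C¹ with (1/2)∫_{∂B_r} |∇ρ|² + (1/(2ε²))(1−ρ²)² ≤ M. Then ‖1 − ρ‖_{L∞(∂B_r)} ≤ C·(ε·M)^{1/3} for a universal constant C, provided ρ ≥ 0; in particular if M = C(log ε)² then ‖ρ − 1‖_{L∞(∂B_r)} → 0 as ε → 0. -/
open Real Set intervalIntegral

/-! With `G x = x - x³/3`, a primitive of `1 - x²`, one has `(x - 1)²(x + 2) = 3 (G 1 - G x)`,
which dominates `|1 - x|³` for `x ≥ 0` and is dominated by `2 (1 - x²)²`. The potential part of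
the energy therefore gives a point of the circle where `(ρ - 1)²(ρ + 2) ≤ 2εM`, because the circle
has length at least `4ε`. By AM–GM, `|(G ∘ ρ)'| = |(1 - ρ²) ρ'|` is at most `ε` times the energy
density, so `G ∘ ρ` oscillates by at most `2εM`, and `|1 - ρ|³ ≤ 8εM` everywhere. -/

-- `a` stands for `ρ'(s)` and `x` for `ρ(s)`.
noncomputable def ginzburgLandauDensity (ε a x : ℝ) : ℝ :=
  a ^ 2 + 1 / (2 * ε ^ 2) * (1 - x ^ 2) ^ 2

section

variable {ε a x : ℝ}

lemma abs_one_sub_pow_three_le (hx : 0 ≤ x) : |1 - x| ^ 3 ≤ (x - 1) ^ 2 * (x + 2) := by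
  rcases le_total x 1 with h | h
  · rw [abs_of_nonneg (by linarith)]
    nlinarith [sq_nonneg (1 - x)]
  · rw [abs_of_nonpos (by linarith)]
    nlinarith [sq_nonneg (x - 1)]

lemma sq_sub_one_mul_add_two_le_density (hε : ε ≠ 0) (hx : 0 ≤ x) :
    (x - 1) ^ 2 * (x + 2) ≤ 4 * ε ^ 2 * ginzburgLandauDensity ε a x := by
  have hfactor : 0 ≤ 2 * (x + 1) ^ 2 - (x + 2) := by nlinarith
  calc (x - 1) ^ 2 * (x + 2) ≤ 2 * (1 - x ^ 2) ^ 2 := by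
        nlinarith [mul_nonneg (sq_nonneg (x - 1)) hfactor]
    _ = 4 * ε ^ 2 * (1 / (2 * ε ^ 2) * (1 - x ^ 2) ^ 2) := by field_simp; ring
    _ ≤ 4 * ε ^ 2 * ginzburgLandauDensity ε a x := by
        unfold ginzburgLandauDensity
        gcongr
        exact le_add_of_nonneg_left (sq_nonneg a)

lemma abs_one_sub_sq_mul_le_density (hε : 0 < ε) :
    |(1 - x ^ 2) * a| ≤ ε * ginzburgLandauDensity ε a x := by
  have hsplit : ε * ginzburgLandauDensity ε a x - |(1 - x ^ 2) * a|
      = ((ε * |a| - |1 - x ^ 2|) ^ 2 + ε ^ 2 * a ^ 2) / (2 * ε) := by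
    unfold ginzburgLandauDensity
    rw [abs_mul]
    field_simp
    linear_combination (-ε ^ 2) * sq_abs a - sq_abs (1 - x ^ 2)
  have : 0 ≤ ((ε * |a| - |1 - x ^ 2|) ^ 2 + ε ^ 2 * a ^ 2) / (2 * ε) := by positivity
  linarith

lemma le_mul_rpow_one_third {c A : ℝ} (hx : 0 ≤ x) (hc : 0 < c) (h : x ^ 3 ≤ c ^ 3 * A) :
    x ≤ c * A ^ ((1 : ℝ) / 3) := by
  have hA : 0 ≤ A := by
    by_contra! hA
    nlinarith [mul_neg_of_pos_of_neg (pow_pos hc 3) hA, pow_nonneg hx 3]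
  rw [← pow_le_pow_iff_left₀ hx (by positivity) three_ne_zero, mul_pow,
    ← rpow_mul_natCast hA]
  norm_num [h]

end

lemma exists_mul_le_integral {g : ℝ → ℝ} {a b : ℝ} (hg : Continuous g) (hab : a ≤ b) :
    ∃ c ∈ Icc a b, (b - a) * g c ≤ ∫ x in a..b, g x := by
  obtain ⟨c, hc, hmin⟩ := isCompact_Icc.exists_isMinOn (nonempty_Icc.2 hab) hg.continuousOn
  refine ⟨c, hc, ?_⟩
  simpa using integral_mono_on hab (intervalIntegrable_const (μ := MeasureTheory.volume))
    (hg.intervalIntegrable a b) fun x hx => hmin hx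

lemma abs_sub_le_integral_abs_deriv {F F' : ℝ → ℝ} {a b u v : ℝ}
    (hF : ∀ x, HasDerivAt F (F' x) x) (hF' : Continuous F') (hu : u ∈ Icc a b)
    (hv : v ∈ Icc a b) : |F v - F u| ≤ ∫ x in a..b, |F' x| := by
  wlog huv : u ≤ v generalizing u v
  · rw [abs_sub_comm]
    exact this hv hu (le_of_not_ge huv)
  rw [← integral_eq_sub_of_hasDerivAt (fun x _ => hF x) (hF'.intervalIntegrable u v)]
  calc |∫ x in u..v, F' x| ≤ ∫ x in u..v, |F' x| := abs_integral_le_integral_abs huv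
    _ ≤ ∫ x in a..b, |F' x| :=
      integral_mono_interval hu.1 huv hv.2 (.of_forall fun _ => abs_nonneg _)
        (hF'.abs.intervalIntegrable a b)

lemma hasDerivAt_sub_pow_three_div_three {ρ ρ' : ℝ → ℝ} {t : ℝ} (hρ : HasDerivAt ρ (ρ' t) t) :
    HasDerivAt (fun s => ρ s - ρ s ^ 3 / 3) ((1 - ρ t ^ 2) * ρ' t) t := by
  refine (hρ.fun_sub ((hρ.fun_pow 3).div_const 3)).congr_deriv ?_
  push_cast
  ring

theorem abs_one_sub_pow_three_le_of_integral_density_le {ρ ρ' : ℝ → ℝ} {ε M a b s : ℝ}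
    (hρ : ∀ t, HasDerivAt ρ (ρ' t) t) (hρ' : Continuous ρ') (hρ0 : ∀ t, 0 ≤ ρ t) (hε : 0 < ε)
    (hab : 4 * ε ≤ b - a) (hE : ∫ t in a..b, ginzburgLandauDensity ε (ρ' t) (ρ t) ≤ 2 * M)
    (hs : s ∈ Icc a b) : |1 - ρ s| ^ 3 ≤ 8 * (ε * M) := by
  have hρc : Continuous ρ := continuous_iff_continuousAt.2 fun t => (hρ t).continuousAt
  have he : Continuous fun t => ginzburgLandauDensity ε (ρ' t) (ρ t) := by
    unfold ginzburgLandauDensity; fun_prop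
  obtain ⟨s₁, hs₁, hmean⟩ := exists_mul_le_integral
    (g := fun t => (ρ t - 1) ^ 2 * (ρ t + 2)) (a := a) (b := b) (by fun_prop) (by linarith)
  have hpot : ∫ t in a..b, (ρ t - 1) ^ 2 * (ρ t + 2)
      ≤ 4 * ε ^ 2 * ∫ t in a..b, ginzburgLandauDensity ε (ρ' t) (ρ t) := by
    rw [← integral_const_mul]
    exact integral_mono_on (by linarith) (by apply Continuous.intervalIntegrable; fun_prop)
      ((continuous_const.mul he).intervalIntegrable a b)
      fun t _ => sq_sub_one_mul_add_two_le_density hε.ne' (hρ0 t)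
  have hnear : (ρ s₁ - 1) ^ 2 * (ρ s₁ + 2) ≤ 2 * (ε * M) := by
    have hF : 0 ≤ (ρ s₁ - 1) ^ 2 * (ρ s₁ + 2) := by have := hρ0 s₁; positivity
    refine le_of_mul_le_mul_left ?_ (by positivity : 0 < 4 * ε)
    calc 4 * ε * ((ρ s₁ - 1) ^ 2 * (ρ s₁ + 2))
        ≤ (b - a) * ((ρ s₁ - 1) ^ 2 * (ρ s₁ + 2)) := by gcongr
      _ ≤ 4 * ε ^ 2 * (2 * M) := hmean.trans (hpot.trans (by gcongr))
      _ = 4 * ε * (2 * (ε * M)) := by ring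
  have hosc : |(ρ s₁ - ρ s₁ ^ 3 / 3) - (ρ s - ρ s ^ 3 / 3)| ≤ 2 * (ε * M) :=
    calc _ ≤ ∫ t in a..b, |(1 - ρ t ^ 2) * ρ' t| :=
          abs_sub_le_integral_abs_deriv (fun t => hasDerivAt_sub_pow_three_div_three (hρ t))
            (by fun_prop) hs hs₁
      _ ≤ ∫ t in a..b, ε * ginzburgLandauDensity ε (ρ' t) (ρ t) :=
          integral_mono_on (by linarith) (by apply Continuous.intervalIntegrable; fun_prop)
            ((continuous_const.mul he).intervalIntegrable a b)
            fun t _ => abs_one_sub_sq_mul_le_density hε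
      _ ≤ 2 * (ε * M) := by
          rw [integral_const_mul]
          linarith [mul_le_mul_of_nonneg_left hE hε.le]
  calc |1 - ρ s| ^ 3 ≤ (ρ s - 1) ^ 2 * (ρ s + 2) := abs_one_sub_pow_three_le (hρ0 s)
    _ = (ρ s₁ - 1) ^ 2 * (ρ s₁ + 2) + 3 * ((ρ s₁ - ρ s₁ ^ 3 / 3) - (ρ s - ρ s ^ 3 / 3)) := by
      ring
    _ ≤ 8 * (ε * M) := by linarith [le_abs_self ((ρ s₁ - ρ s₁ ^ 3 / 3) - (ρ s - ρ s ^ 3 / 3))]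

/-- clearing-out estimate on a circle (parametrized by arclength, the function
`ρ` being `2πr`-periodic): an energy bound `M` forces `‖1 − ρ‖_∞ ≤ C (εM)^{1/3}`. -/
theorem stmt16 :
    ∃ C : ℝ, 0 < C ∧
      ∀ (r ε M : ℝ) (ρ ρ' : ℝ → ℝ), 0 < r → 0 < ε → ε ≤ r →
        (∀ s, HasDerivAt ρ (ρ' s) s) → Continuous ρ' →
        (∀ s, ρ (s + 2 * π * r) = ρ s) → (∀ s, 0 ≤ ρ s) →
        (1 / 2) * (∫ s in (0:ℝ)..(2 * π * r),
            (ρ' s) ^ 2 + (1 / (2 * ε ^ 2)) * (1 - (ρ s) ^ 2) ^ 2) ≤ M →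
        ∀ s, |1 - ρ s| ≤ C * (ε * M) ^ ((1:ℝ)/3) := by
  refine ⟨2, two_pos, fun r ε M ρ ρ' _ hε hεr hρ hρ' hper hρ0 hE s => ?_⟩
  have hlen : 4 * ε ≤ 2 * π * r - 0 := by nlinarith [pi_gt_three]
  obtain ⟨s', hs', hss'⟩ := Function.Periodic.exists_mem_Ico₀ hper (by linarith) s
  have hcube := abs_one_sub_pow_three_le_of_integral_density_le hρ hρ' hρ0 hε hlen
    (M := M) (by unfold ginzburgLandauDensity; linarith) (Ico_subset_Icc_self hs')
  rw [hss']
  exact le_mul_rpow_one_third (abs_nonneg _) two_pos (by linarith)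
end
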